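/- There is a weight-preserving bijection between pairs (λ, μ) with λ self-conjugate and μ doubled distinct, and doubled distinct partitions ν, such that |ν| = 2(|λ| + |μ|) and δ_ν = δ_λ · δ_μ; explicitly, ν is the unique doubled distinct partition whose multiset of principal hook lengths is {2h : h ∈ Δ}, where Δ is the union of the principal hook lengths of λ and μ. -/

import Mathlib

open scoped Classical

/-- An integer partition, given by its (0-indexed) sequence of parts. -/
structure IntPartition where
  parts : ℕ → ℕ
  antitone : Antitone parts
  finite_support : (Function.support parts).Finite

namespace IntPartition

/-- The weight `|λ|` of a partition: the sum of its parts. -/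
noncomputable def weight (p : IntPartition) : ℕ := p.finite_support.toFinset.sum p.parts

/-- The conjugate partition, as a function: `conj j` is the number of parts `> j`. -/
noncomputable def conj (p : IntPartition) (j : ℕ) : ℕ := {i | j < p.parts i}.ncard

/-- The cells (boxes) of the Ferrers diagram, 0-indexed. -/
def cells (p : IntPartition) : Set (ℕ × ℕ) := {c | c.2 < p.parts c.1}

lemma cells_finite (p : IntPartition) : p.cells.Finite := by
  have hsub : p.cells ⊆ (Function.support p.parts) ×ˢ (Set.Iio (p.parts 0)) := by
    rintro ⟨i, j⟩ h
    have hj : j < p.parts i := h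
    constructor
    · simp only [Function.mem_support]
      omega
    · exact lt_of_lt_of_le hj (p.antitone (Nat.zero_le i))
  exact (p.finite_support.prod (Set.finite_Iio _)).subset hsub

/-- The cells of the Ferrers diagram as a finset. -/
noncomputable def cellsFinset (p : IntPartition) : Finset (ℕ × ℕ) := p.cells_finite.toFinset

/-- Hook length of the (0-indexed) box `(i,j)`:  `λ_i - j + λ*_j - i - 1` (1-indexed formula). -/
noncomputable def hook (p : IntPartition) (i j : ℕ) : ℕ := p.parts i + p.conj j - i - j - 1

/-- The multiset of hook lengths of all boxes of `p`. -/
noncomputable def hooks (p : IntPartition) : Multiset ℕ :=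
  p.cellsFinset.val.map fun c => p.hook c.1 c.2

/-- The Durfee length: the side of the largest square contained in the diagram. -/
noncomputable def durfee (p : IntPartition) : ℕ := {i | i < p.parts i}.ncard

/-- The sign `δ_λ = (-1)^{D(λ)}`. -/
noncomputable def delta (p : IntPartition) : ℤ := (-1) ^ p.durfee

/-- Self-conjugate partitions: `λ = λ*`. -/
noncomputable def IsSelfConjugate (p : IntPartition) : Prop := ∀ j, p.conj j = p.parts j

/-- Doubled distinct partitions: `λ_i = λ*_i + 1` for `i` in the Durfee square. -/
noncomputable def IsDoubledDistinct (p : IntPartition) : Prop :=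
  ∀ i < p.durfee, p.parts i = p.conj i + 1

/-- `t`-cores: partitions with no hook length divisible by `t`. -/
noncomputable def IsCore (t : ℕ) (p : IntPartition) : Prop := ∀ h ∈ p.hooks, ¬ t ∣ h

/-- The multiset of signed hook lengths `ε_h · h`, where `ε_h = -1` for boxes strictly
above the diagonal and `1` otherwise. -/
noncomputable def signedHooks (p : IntPartition) : Multiset ℤ :=
  p.cellsFinset.val.map fun c => (if c.1 < c.2 then -1 else 1) * (p.hook c.1 c.2 : ℤ)

/-- The multiset of signed hook lengths `ε_h · h` over boxes whose hook length is a
multiple of `t`. -/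
noncomputable def signedHooksT (t : ℕ) (p : IntPartition) : Multiset ℤ :=
  (p.cellsFinset.filter fun c => t ∣ p.hook c.1 c.2).val.map
    fun c => (if c.1 < c.2 then -1 else 1) * (p.hook c.1 c.2 : ℤ)

/-- The multiset of principal hook lengths (hooks of diagonal boxes). -/
noncomputable def principalHooks (p : IntPartition) : Multiset ℕ :=
  (Finset.range p.durfee).val.map fun i => p.hook i i

lemma conj_set_finite (p : IntPartition) (j : ℕ) : {i | j < p.parts i}.Finite := by
  apply p.finite_support.subset
  intro i hi
  simp only [Set.mem_setOf_eq] at hi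
  simp only [Function.mem_support]
  omega

/-- The conjugate partition, as a `Partition`. -/
noncomputable def conjugate (p : IntPartition) : IntPartition where
  parts := p.conj
  antitone := fun a b hab =>
    Set.ncard_le_ncard (fun i hi => lt_of_le_of_lt hab hi) (p.conj_set_finite a)
  finite_support := by
    apply (Set.finite_Iio (p.parts 0)).subset
    intro j hj
    obtain ⟨i, hi⟩ := Set.nonempty_of_ncard_ne_zero hj
    exact lt_of_lt_of_le hi (p.antitone (Nat.zero_le i))

end IntPartition

/-- "Infinite" product `∏_{k ≥ 1} f k` of power series, defined coefficientwise;
this is the honest infinite product whenever `f k ≡ 1 mod X^k`. -/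
noncomputable def Pinf {R : Type*} [CommRing R] (f : ℕ → PowerSeries R) : PowerSeries R :=
  PowerSeries.mk fun n => PowerSeries.coeff n (∏ k ∈ Finset.range (n + 1), f (k + 1))

/-- The Euler-type product `E R m = ∏_{k ≥ 1} (1 - x^{m k}) = (q^m; q^m)_∞`. -/
noncomputable def E (R : Type*) [CommRing R] (m : ℕ) : PowerSeries R :=
  Pinf fun k => 1 - PowerSeries.X ^ (m * k)

/-- The binomial series `(1 - x^m)^a` for an exponent `a` in a binomial ring. -/
noncomputable def binomSeries {R : Type*} [CommRing R] [BinomialRing R] (a : R) (m : ℕ) :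
    PowerSeries R :=
  PowerSeries.mk fun n => if m ∣ n then (-1) ^ (n / m) * Ring.choose a (n / m) else 0

/-- `m` is the position of a vertical step (a `0`) in the canonical bi-infinite binary
word of the partition `p`. -/
def zeroPos (p : IntPartition) (m : ℤ) : Prop := ∃ i : ℕ, (p.parts i : ℤ) - i - 1 = m

/-- The Littlewood decomposition, as a relation: `core` and `quot` are the `t`-core and
`t`-quotient of `lam`, expressed via the binary-word encoding: the `k`-th subsequence of
the word of `lam` is the word of `quot k` (up to the shift `s k`), and the `k`-th
subsequence of the word of `core` is the corresponding flushed word `...000111...` with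
the same charge. -/
def IsLittlewood (t : ℕ) (lam core : IntPartition) (quot : ℕ → IntPartition) : Prop :=
  ∃ s : ℕ → ℤ,
    (∀ k < t, ∀ j : ℤ, zeroPos (quot k) j ↔ zeroPos lam (t * (j + s k) + k)) ∧
    (∀ k < t, ∀ j : ℤ, zeroPos core (t * (j + s k) + k) ↔ j < 0)

/-!
A self-conjugate partition is determined by its Frobenius arms `a₀ > ⋯ > a_{d-1}`, which form
an arbitrary finite set of naturals, and its principal hooks are the `2aᵢ + 1`. A doubled
distinct partition is determined by its Frobenius legs `b₀ > ⋯ > b_{d-1}` (its arms are the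
`bᵢ + 1`), again an arbitrary finite set, and its principal hooks are the `2bᵢ + 2`.
Interleaving the arms of `λ` and the legs of `μ` through `ℕ ⊕ ℕ ≃ ℕ`, `a ↦ 2a`, `b ↦ 2b + 1`,
gives the legs of `ν`, whose principal hooks are then twice those of `λ` and `μ`. Weight and
Durfee size are the sum and the number of principal hooks.
-/

open Finset

namespace Finset

noncomputable def nthLargest (s : Finset ℕ) (i : ℕ) : ℕ := (s.sort (· ≥ ·)).getD i 0

variable (s : Finset ℕ)

lemma strictAntiOn_nthLargest : StrictAntiOn s.nthLargest (Set.Iio #s) := fun i hi j hj hij => by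
  simp only [Set.mem_Iio, ← length_sort (· ≥ ·)] at hi hj
  simp only [nthLargest, List.getD_eq_getElem _ _ hi, List.getD_eq_getElem _ _ hj]
  exact (sortedGT_sort s).getElem_lt_getElem_iff.mpr hij

lemma image_nthLargest : (range #s).image s.nthLargest = s := by
  ext x
  simp only [mem_image, mem_range, ← mem_sort (· ≥ ·) (s := s), List.mem_iff_getElem,
    ← length_sort (· ≥ ·) (s := s), nthLargest]
  exact exists_congr fun i => ⟨fun ⟨hi, h⟩ => ⟨hi, by rwa [List.getD_eq_getElem _ _ hi] at h⟩,
    fun ⟨hi, h⟩ => ⟨hi, by rwa [List.getD_eq_getElem _ _ hi]⟩⟩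

lemma nthLargest_image {d : ℕ} {f : ℕ → ℕ} (hf : StrictAntiOn f (Set.Iio d)) {i : ℕ}
    (hi : i < d) : ((range d).image f).nthLargest i = f i := by
  have hsorted : ((List.range d).map f).SortedGT :=
    List.sortedGT_iff_pairwise.mpr <| List.pairwise_map.mpr <|
      (List.pairwise_lt_range).imp_of_mem fun ha hb hab =>
        hf (List.mem_range.mp ha) (List.mem_range.mp hb) hab
  have hsort : ((range d).image f).sort (· ≥ ·) = (List.range d).map f :=
    (sortedGT_sort _).eq_of_mem_iff hsorted fun x => by simp
  simp [nthLargest, hsort, hi]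

end Finset

lemma eq_Iio_ncard_of_isLowerSet {s : Set ℕ} (hs : IsLowerSet s) (hfin : s.Finite) :
    s = Set.Iio s.ncard := by
  obtain h | ⟨a, rfl⟩ := hs.eq_univ_or_Iio
  · exact absurd (h ▸ hfin) Set.infinite_univ
  · rw [Set.ncard_Iio_nat]

namespace IntPartition

lemma parts_injective : Function.Injective parts := by
  rintro ⟨f, _, _⟩ ⟨g, _, _⟩ (rfl : f = g)
  rfl

section Durfee

variable (p : IntPartition)

lemma lt_conj_iff {i j : ℕ} : i < p.conj j ↔ j < p.parts i := by
  have hs : IsLowerSet {i | j < p.parts i} := fun _ _ hba ha => ha.trans_le (p.antitone hba)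
  rw [conj, ← Set.mem_Iio, ← eq_Iio_ncard_of_isLowerSet hs (p.conj_set_finite j)]
  rfl

lemma lt_durfee_iff {i : ℕ} : i < p.durfee ↔ i < p.parts i := by
  have hs : IsLowerSet {i | i < p.parts i} := fun _ _ hba ha =>
    hba.trans_lt (ha.trans_le (p.antitone hba))
  have hfin : {i | i < p.parts i}.Finite :=
    p.finite_support.subset fun i hi => Nat.pos_iff_ne_zero.mp (Nat.zero_lt_of_lt hi)
  rw [durfee, ← Set.mem_Iio, ← eq_Iio_ncard_of_isLowerSet hs hfin]
  rfl

lemma lt_durfee_iff_lt_conj {i : ℕ} : i < p.durfee ↔ i < p.conj i := by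
  rw [lt_conj_iff, lt_durfee_iff]

lemma parts_le_durfee {i : ℕ} (h : p.durfee ≤ i) : p.parts i ≤ p.durfee :=
  (p.antitone h).trans (not_lt.mp fun hd => lt_irrefl _ ((p.lt_durfee_iff).mpr hd))

lemma parts_eq_card_filter_conj {i : ℕ} (h : p.durfee ≤ i) :
    p.parts i = #((range p.durfee).filter (i < p.conj ·)) := by
  have hle := p.parts_le_durfee h
  rw [filter_congr fun j _ => p.lt_conj_iff,
    show (range p.durfee).filter (· < p.parts i) = range (p.parts i) by
      ext; simp only [mem_filter, mem_range]; omega,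
    card_range]

theorem eq_of_durfee_eq {q : IntPartition} (hd : p.durfee = q.durfee)
    (hparts : ∀ i < p.durfee, p.parts i = q.parts i)
    (hconj : ∀ j < p.durfee, p.conj j = q.conj j) : p = q := by
  refine parts_injective (funext fun i => ?_)
  rcases lt_or_ge i p.durfee with hi | hi
  · exact hparts i hi
  · rw [p.parts_eq_card_filter_conj hi, q.parts_eq_card_filter_conj (hd ▸ hi), ← hd]
    exact congrArg card (filter_congr fun j hj => by rw [hconj j (mem_range.mp hj)])

lemma hook_self {i : ℕ} (h : i < p.durfee) :
    p.hook i i = (p.parts i - i - 1) + (p.conj i - i - 1) + 1 := by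
  have := p.lt_durfee_iff.mp h
  have := p.lt_durfee_iff_lt_conj.mp h
  unfold hook
  omega

lemma durfee_eq_card_principalHooks : p.durfee = Multiset.card p.principalHooks := by
  simp [principalHooks]

lemma weight_eq_sum_range {N : ℕ} (hN : p.parts N = 0) :
    p.weight = ∑ i ∈ range N, p.parts i := by
  refine sum_subset (fun i hi => ?_) (fun i _ hi => by simpa using hi)
  simp only [Set.Finite.mem_toFinset, Function.mem_support] at hi
  exact mem_range.mpr (not_le.mp fun hNi => hi (Nat.eq_zero_of_le_zero (hN ▸ p.antitone hNi)))

/-- The cells strictly below the diagonal, counted by rows and by columns. -/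
lemma sum_min_parts_eq_sum_conj {N : ℕ} (hN : p.parts N = 0) :
    ∑ i ∈ range N, min i (p.parts i) = ∑ j ∈ range N, (p.conj j - j - 1) := by
  have hconj : ∀ j, p.conj j ≤ N := fun j =>
    not_lt.mp fun h => by simpa [hN] using p.lt_conj_iff.mp h
  calc ∑ i ∈ range N, min i (p.parts i)
      = ∑ i ∈ range N, #((range N).filter fun j => j < i ∧ j < p.parts i) := by
        refine sum_congr rfl fun i hi => ?_
        rw [mem_range] at hi
        rw [show (range N).filter (fun j => j < i ∧ j < p.parts i) = range (min i (p.parts i)) by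
          ext; simp only [mem_filter, mem_range, lt_min_iff]; omega, card_range]
    _ = ∑ j ∈ range N, #((range N).filter fun i => j < i ∧ i < p.conj j) := by
        simp only [card_filter, p.lt_conj_iff]
        exact sum_comm
    _ = ∑ j ∈ range N, (p.conj j - j - 1) := by
        refine sum_congr rfl fun j _ => ?_
        rw [show (range N).filter (fun i => j < i ∧ i < p.conj j) = Ioo j (p.conj j) by
          ext; simp only [mem_filter, mem_range, mem_Ioo]; have := hconj j; omega, Nat.card_Ioo]

/-- Every cell lies on exactly one principal hook. -/
theorem weight_eq_sum_principalHooks : p.weight = p.principalHooks.sum := by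
  obtain ⟨N, hN⟩ : ∃ N, p.parts N = 0 := by
    simpa using p.finite_support.exists_notMem
  have hdN : p.durfee ≤ N := not_lt.mp fun h => by simpa [hN] using p.lt_durfee_iff.mp h
  calc p.weight = ∑ i ∈ range N, ((p.parts i - i) + min i (p.parts i)) := by
        rw [p.weight_eq_sum_range hN]
        exact sum_congr rfl fun i _ => by omega
    _ = ∑ i ∈ range N, ((p.parts i - i) + (p.conj i - i - 1)) := by
        rw [sum_add_distrib, sum_add_distrib, p.sum_min_parts_eq_sum_conj hN]
    _ = ∑ i ∈ range p.durfee, p.hook i i := by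
        refine (sum_subset (range_subset_range.mpr hdN) fun i _ hi => ?_).symm.trans
          (sum_congr rfl fun i hi => ?_)
        · have := p.lt_durfee_iff.not.mp (by simpa using hi)
          have := p.lt_durfee_iff_lt_conj.not.mp (by simpa using hi)
          omega
        · rw [p.hook_self (mem_range.mp hi)]
          have := p.lt_durfee_iff.mp (mem_range.mp hi)
          omega
    _ = p.principalHooks.sum := rfl

end Durfee

section Frobenius

variable (p : IntPartition)

noncomputable def frobeniusArms : Finset ℕ := (range p.durfee).image fun i => p.parts i - i - 1

noncomputable def frobeniusLegs : Finset ℕ := (range p.durfee).image fun j => p.conj j - j - 1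

lemma strictAntiOn_arm : StrictAntiOn (fun i => p.parts i - i - 1) (Set.Iio p.durfee) :=
  fun i _ j hj hij => by
    have := p.lt_durfee_iff.mp hj
    have := p.antitone hij.le
    dsimp only
    omega

lemma strictAntiOn_leg : StrictAntiOn (fun j => p.conj j - j - 1) (Set.Iio p.durfee) :=
  fun i _ j hj hij => by
    have := p.lt_durfee_iff_lt_conj.mp hj
    have := p.conjugate.antitone hij.le
    dsimp only [conjugate] at *
    omega

lemma card_frobeniusArms : #p.frobeniusArms = p.durfee := by
  rw [frobeniusArms, card_image_of_injOn (by simpa using p.strictAntiOn_arm.injOn), card_range]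

lemma card_frobeniusLegs : #p.frobeniusLegs = p.durfee := by
  rw [frobeniusLegs, card_image_of_injOn (by simpa using p.strictAntiOn_leg.injOn), card_range]

lemma principalHooks_eq_map_range : p.principalHooks =
    (Multiset.range p.durfee).map fun i => (p.parts i - i - 1) + (p.conj i - i - 1) + 1 :=
  Multiset.map_congr rfl fun i hi => p.hook_self (by simpa using hi)

lemma principalHooks_of_isSelfConjugate (hp : p.IsSelfConjugate) :
    p.principalHooks = p.frobeniusArms.val.map (2 * · + 1) := by
  rw [frobeniusArms, image_val_of_injOn (by simpa using p.strictAntiOn_arm.injOn),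
    Multiset.map_map, principalHooks_eq_map_range]
  refine Multiset.map_congr rfl fun i _ => ?_
  simp only [Function.comp, hp i]
  omega

lemma principalHooks_of_isDoubledDistinct (hp : p.IsDoubledDistinct) :
    p.principalHooks = p.frobeniusLegs.val.map (2 * · + 2) := by
  rw [frobeniusLegs, image_val_of_injOn (by simpa using p.strictAntiOn_leg.injOn),
    Multiset.map_map, principalHooks_eq_map_range]
  refine Multiset.map_congr rfl fun i hi => ?_
  have := p.lt_durfee_iff_lt_conj.mp (by simpa using hi)
  simp only [Function.comp, hp i (by simpa using hi)]
  omega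

end Frobenius

section OfYoungDiagram

variable (μ : YoungDiagram)

noncomputable def ofYoungDiagram : IntPartition where
  parts := μ.rowLen
  antitone _ _ h := μ.rowLen_anti _ _ h
  finite_support := (Set.finite_Iio (μ.colLen 0)).subset fun _ hi =>
    YoungDiagram.mem_iff_lt_colLen.mp (YoungDiagram.mem_iff_lt_rowLen.mpr (Nat.pos_of_ne_zero hi))

lemma parts_ofYoungDiagram : (ofYoungDiagram μ).parts = μ.rowLen := rfl

lemma conj_ofYoungDiagram (j : ℕ) : (ofYoungDiagram μ).conj j = μ.colLen j :=
  eq_of_forall_lt_iff fun i => by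
    rw [lt_conj_iff, parts_ofYoungDiagram, ← YoungDiagram.mem_iff_lt_rowLen,
      YoungDiagram.mem_iff_lt_colLen]

lemma lt_durfee_ofYoungDiagram_iff {i : ℕ} : i < (ofYoungDiagram μ).durfee ↔ (i, i) ∈ μ := by
  rw [lt_durfee_iff, parts_ofYoungDiagram, YoungDiagram.mem_iff_lt_rowLen]

end OfYoungDiagram

section OfFrobenius

variable {d : ℕ} {a b : ℕ → ℕ}

lemma add_le_add_of_strictAntiOn (ha : StrictAntiOn a (Set.Iio d)) {i j : ℕ} (hij : i ≤ j)
    (hj : j < d) : a j + j ≤ a i + i := by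
  induction j, hij using Nat.le_induction with
  | base => exact le_rfl
  | succ j hij ih =>
    have := ha (show j < d by omega) hj (Nat.lt_succ_self j)
    have := ih (by omega)
    omega

/-- The diagram with Frobenius symbol `(a 0, …, a (d-1) | b 0, …, b (d-1))`: row `i < d`
has arm `a i`, column `j < d` has leg `b j`. -/
def frobeniusCells (d : ℕ) (a b : ℕ → ℕ) : Set (ℕ × ℕ) :=
  {c | (c.1 < d ∧ c.2 ≤ a c.1 + c.1) ∨ (c.2 < d ∧ c.1 ≤ b c.2 + c.2)}

lemma isLowerSet_frobeniusCells (ha : StrictAntiOn a (Set.Iio d))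
    (hb : StrictAntiOn b (Set.Iio d)) : IsLowerSet (frobeniusCells d a b) := by
  rintro ⟨i, j⟩ ⟨i', j'⟩ ⟨hi, hj⟩ (⟨hid, hja⟩ | ⟨hjd, hib⟩)
  · have := add_le_add_of_strictAntiOn ha hi hid
    exact Or.inl ⟨by dsimp only at *; omega, by dsimp only at *; omega⟩
  · have := add_le_add_of_strictAntiOn hb hj hjd
    exact Or.inr ⟨by dsimp only at *; omega, by dsimp only at *; omega⟩

lemma frobeniusCells_subset (ha : StrictAntiOn a (Set.Iio d))
    (hb : StrictAntiOn b (Set.Iio d)) :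
    frobeniusCells d a b ⊆ Set.Iio (b 0 + d) ×ˢ Set.Iio (a 0 + d) := by
  rintro ⟨i, j⟩ (⟨hid, hja⟩ | ⟨hjd, hib⟩) <;> dsimp only at * <;>
    simp only [Set.mem_prod, Set.mem_Iio]
  · have := add_le_add_of_strictAntiOn ha (Nat.zero_le i) hid
    omega
  · have := add_le_add_of_strictAntiOn hb (Nat.zero_le j) hjd
    omega

variable (d a b) in
noncomputable def frobeniusDiagram (ha : StrictAntiOn a (Set.Iio d))
    (hb : StrictAntiOn b (Set.Iio d)) : YoungDiagram where
  cells := (((Set.finite_Iio _).prod (Set.finite_Iio _)).subset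
    (frobeniusCells_subset ha hb)).toFinset
  isLowerSet := by simpa using isLowerSet_frobeniusCells ha hb

variable (ha : StrictAntiOn a (Set.Iio d)) (hb : StrictAntiOn b (Set.Iio d))

lemma mem_frobeniusDiagram {c : ℕ × ℕ} :
    c ∈ frobeniusDiagram d a b ha hb ↔ c ∈ frobeniusCells d a b := by
  simp [frobeniusDiagram, ← YoungDiagram.mem_cells]

lemma transpose_frobeniusDiagram :
    (frobeniusDiagram d a b ha hb).transpose = frobeniusDiagram d b a hb ha :=
  SetLike.ext fun _ => by
    simp only [YoungDiagram.mem_transpose, mem_frobeniusDiagram, frobeniusCells,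
      Set.mem_ofPred_eq, Prod.fst_swap, Prod.snd_swap, or_comm]

lemma rowLen_frobeniusDiagram {i : ℕ} (hi : i < d) :
    (frobeniusDiagram d a b ha hb).rowLen i = a i + i + 1 :=
  eq_of_forall_lt_iff fun j => by
    have := add_le_add_of_strictAntiOn ha (Nat.le_sub_one_of_lt hi) (Nat.sub_one_lt_of_lt hi)
    rw [← YoungDiagram.mem_iff_lt_rowLen, mem_frobeniusDiagram, frobeniusCells,
      Set.mem_ofPred_eq]
    dsimp only
    omega

lemma colLen_frobeniusDiagram {j : ℕ} (hj : j < d) :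
    (frobeniusDiagram d a b ha hb).colLen j = b j + j + 1 := by
  rw [← YoungDiagram.rowLen_transpose, transpose_frobeniusDiagram,
    rowLen_frobeniusDiagram hb ha hj]

variable (d a b) in
noncomputable def ofFrobenius : IntPartition := ofYoungDiagram (frobeniusDiagram d a b ha hb)

lemma parts_ofFrobenius {i : ℕ} (hi : i < d) : (ofFrobenius d a b ha hb).parts i = a i + i + 1 :=
  rowLen_frobeniusDiagram ha hb hi

lemma conj_ofFrobenius {j : ℕ} (hj : j < d) : (ofFrobenius d a b ha hb).conj j = b j + j + 1 := by
  rw [ofFrobenius, conj_ofYoungDiagram, colLen_frobeniusDiagram ha hb hj]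

lemma durfee_ofFrobenius : (ofFrobenius d a b ha hb).durfee = d :=
  eq_of_forall_lt_iff fun i => by
    rw [ofFrobenius, lt_durfee_ofYoungDiagram_iff, mem_frobeniusDiagram, frobeniusCells,
      Set.mem_ofPred_eq]
    omega

lemma frobeniusArms_ofFrobenius : (ofFrobenius d a b ha hb).frobeniusArms = (range d).image a := by
  rw [frobeniusArms, durfee_ofFrobenius]
  exact image_congr fun i hi => by
    rw [parts_ofFrobenius ha hb (by simpa using hi)]
    omega

lemma frobeniusLegs_ofFrobenius : (ofFrobenius d a b ha hb).frobeniusLegs = (range d).image b := by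
  rw [frobeniusLegs, durfee_ofFrobenius]
  exact image_congr fun j hj => by
    rw [conj_ofFrobenius ha hb (by simpa using hj)]
    omega

lemma ofFrobenius_eq {p : IntPartition} (hd : p.durfee = d)
    (harm : ∀ i < d, a i = p.parts i - i - 1) (hleg : ∀ j < d, b j = p.conj j - j - 1) :
    ofFrobenius d a b ha hb = p := by
  refine eq_of_durfee_eq _ (by rw [durfee_ofFrobenius, hd]) (fun i hi => ?_) (fun j hj => ?_)
  · rw [durfee_ofFrobenius] at hi
    have := p.lt_durfee_iff.mp (hd ▸ hi)
    rw [parts_ofFrobenius ha hb hi, harm i hi]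
    omega
  · rw [durfee_ofFrobenius] at hj
    have := p.lt_durfee_iff_lt_conj.mp (hd ▸ hj)
    rw [conj_ofFrobenius ha hb hj, hleg j hj]
    omega

lemma isSelfConjugate_ofFrobenius : (ofFrobenius d a a ha ha).IsSelfConjugate := fun j => by
  rw [ofFrobenius, conj_ofYoungDiagram, ← YoungDiagram.rowLen_transpose,
    transpose_frobeniusDiagram]
  rfl

lemma isDoubledDistinct_ofFrobenius (hab : ∀ i < d, a i = b i + 1) :
    (ofFrobenius d a b ha hb).IsDoubledDistinct := fun i hi => by
  rw [durfee_ofFrobenius] at hi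
  rw [parts_ofFrobenius ha hb hi, conj_ofFrobenius ha hb hi, hab i hi]
  omega

end OfFrobenius

noncomputable def selfConjugateEquiv : {p : IntPartition // p.IsSelfConjugate} ≃ Finset ℕ where
  toFun p := p.1.frobeniusArms
  invFun A := ⟨ofFrobenius #A A.nthLargest A.nthLargest A.strictAntiOn_nthLargest
    A.strictAntiOn_nthLargest, isSelfConjugate_ofFrobenius _⟩
  left_inv := fun ⟨p, hp⟩ => Subtype.ext <| by
    have hd := p.card_frobeniusArms
    refine ofFrobenius_eq _ _ hd.symm (fun i hi => ?_) (fun j hj => ?_)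
    · exact nthLargest_image p.strictAntiOn_arm (hd ▸ hi)
    · rw [hp j]
      exact nthLargest_image p.strictAntiOn_arm (hd ▸ hj)
  right_inv A := (frobeniusArms_ofFrobenius _ _).trans A.image_nthLargest

noncomputable def doubledDistinctEquiv :
    {p : IntPartition // p.IsDoubledDistinct} ≃ Finset ℕ where
  toFun p := p.1.frobeniusLegs
  invFun B := ⟨ofFrobenius #B (B.nthLargest · + 1) B.nthLargest
    (fun _ hi _ hj hij => Nat.add_lt_add_right (B.strictAntiOn_nthLargest hi hj hij) 1)
    B.strictAntiOn_nthLargest, isDoubledDistinct_ofFrobenius _ _ fun _ _ => rfl⟩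
  left_inv := fun ⟨p, hp⟩ => Subtype.ext <| by
    have hd := p.card_frobeniusLegs
    refine ofFrobenius_eq _ _ hd.symm (fun i hi => ?_) (fun j hj => ?_)
    · dsimp only at hi ⊢
      have := p.lt_durfee_iff_lt_conj.mp (hd ▸ hi)
      rw [frobeniusLegs, nthLargest_image p.strictAntiOn_leg (hd ▸ hi), hp i (hd ▸ hi)]
      omega
    · exact nthLargest_image p.strictAntiOn_leg (hd ▸ hj)
  right_inv B := (frobeniusLegs_ofFrobenius _ _).trans B.image_nthLargest

noncomputable def selfConjugateProdDoubledDistinctEquiv :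
    {lm : IntPartition × IntPartition // lm.1.IsSelfConjugate ∧ lm.2.IsDoubledDistinct} ≃
      {ν : IntPartition // ν.IsDoubledDistinct} :=
  Equiv.subtypeProdEquivProd.trans <|
    (selfConjugateEquiv.prodCongr doubledDistinctEquiv).trans <|
      Finset.sumEquiv.toEquiv.symm.trans <|
        Equiv.natSumNatEquivNat.finsetCongr.trans doubledDistinctEquiv.symm

lemma principalHooks_selfConjugateProdDoubledDistinctEquiv
    (x : {lm : IntPartition × IntPartition // lm.1.IsSelfConjugate ∧ lm.2.IsDoubledDistinct}) :
    (selfConjugateProdDoubledDistinctEquiv x).1.principalHooks =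
      (x.1.1.principalHooks + x.1.2.principalHooks).map (2 * ·) := by
  obtain ⟨⟨l, m⟩, hl, hm⟩ := x
  have hlegs : (selfConjugateProdDoubledDistinctEquiv ⟨(l, m), hl, hm⟩).1.frobeniusLegs =
      (l.frobeniusArms.disjSum m.frobeniusLegs).map Equiv.natSumNatEquivNat.toEmbedding :=
    doubledDistinctEquiv.apply_symm_apply _
  rw [principalHooks_of_isDoubledDistinct _ (selfConjugateProdDoubledDistinctEquiv _).2, hlegs,
    principalHooks_of_isSelfConjugate l hl, principalHooks_of_isDoubledDistinct m hm]
  simp only [map_val, val_disjSum, Multiset.disjSum, Multiset.map_add, Multiset.map_map,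
    Function.comp_def, Equiv.coe_toEmbedding, Equiv.natSumNatEquivNat_apply, Sum.elim_inl,
    Sum.elim_inr]
  exact congrArg₂ (· + ·) (Multiset.map_congr rfl fun _ _ => by ring)
    (Multiset.map_congr rfl fun _ _ => by ring)

end IntPartition

theorem sc_dd_pairs_to_dd_bijection :
    ∃ Φ : {lm : IntPartition × IntPartition //
            lm.1.IsSelfConjugate ∧ lm.2.IsDoubledDistinct} ≃
          {ν : IntPartition // ν.IsDoubledDistinct},
      ∀ x, ((Φ x).1.weight = 2 * (x.1.1.weight + x.1.2.weight)) ∧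
        ((Φ x).1.delta = x.1.1.delta * x.1.2.delta) ∧
        ((Φ x).1.principalHooks =
          (x.1.1.principalHooks + x.1.2.principalHooks).map (fun h => 2 * h)) := by
  refine ⟨IntPartition.selfConjugateProdDoubledDistinctEquiv, fun x => ?_⟩
  have hooks := IntPartition.principalHooks_selfConjugateProdDoubledDistinctEquiv x
  refine ⟨?_, ?_, hooks⟩
  · simp only [IntPartition.weight_eq_sum_principalHooks, hooks]
    rw [Multiset.sum_map_mul_left, Multiset.map_id', Multiset.sum_add]
  · simp only [IntPartition.delta, IntPartition.durfee_eq_card_principalHooks, hooks,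
      Multiset.card_map, Multiset.card_add, pow_add]
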